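/- Let f : (0,∞) → ℝ be convex and φ : ℝⁿ → [0,∞) a log-concave function (with sufficient smoothness and integrability; write φ = e^{−ψ}, ψ strictly convex C², ∇ψ a diffeomorphism onto ℝⁿ). Then ∫_{supp φ} φ f( e^{⟨∇φ/φ, x⟩} φ^{−2} det(Hess(−ln φ)) ) dx ≥ f( (∫ φ° dx)/(∫ φ dx) ) · ∫_{supp φ} φ dx. If f is concave the inequality is reversed. -/

import Mathlib

/-!
Write `g = e^{2ψ - ⟨∇ψ, x⟩} det D²ψ` for the argument of `f`. At `y = ∇ψ(x)` the supremum defining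
the Legendre transform is attained, so `L(∇ψ x) = ⟨x, ∇ψ x⟩ - ψ x`, and hence
`e^{-ψ} g = e^{-L ∘ ∇ψ} det D²ψ`. The Hessian of the convex `ψ` has nonnegative determinant, and it
is nonzero because `∇L ∘ ∇ψ = id`; so `g > 0` and the change of variables `y = ∇ψ(x)` gives
`∫ e^{-ψ} g = ∫ e^{-L}`. Jensen's inequality for the probability measure `e^{-ψ} dx / ∫ e^{-ψ}`,
proved by integrating a supporting line of `f` at the mean of `g`, is then the claim.
-/

open Real MeasureTheory

noncomputable def detHess {n : ℕ} (ψ : EuclideanSpace ℝ (Fin n) → ℝ)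
    (x : EuclideanSpace ℝ (Fin n)) : ℝ :=
  LinearMap.det (fderiv ℝ (gradient ψ) x).toLinearMap

open Set

section NormedSpace

variable {E : Type*} [NormedAddCommGroup E] [NormedSpace ℝ E]

theorem ConvexOn.add_fderiv_sub_le {ψ : E → ℝ} {s : Set E} (hc : ConvexOn ℝ s ψ) {x z : E}
    (hx : x ∈ s) (hz : z ∈ s) (hd : DifferentiableAt ℝ ψ x) :
    ψ x + fderiv ℝ ψ x (z - x) ≤ ψ z := by
  set u : ℝ → ℝ := fun t => ψ (x + t • (z - x))
  have hu : ConvexOn ℝ (Icc 0 1) u := by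
    refine ((hc.comp_affineMap (AffineMap.lineMap x z)).subset ?_ (convex_Icc 0 1)).congr ?_
    · exact fun t ht => hc.1.lineMap_mem hx hz ⟨ht.1, ht.2⟩
    · intro t _
      simp [u, AffineMap.lineMap_apply_module', add_comm]
  have hline : HasDerivAt (fun t : ℝ => x + t • (z - x)) (z - x) 0 := by
    simpa using ((hasDerivAt_id (0 : ℝ)).smul_const (z - x)).const_add x
  have hu' : HasDerivAt u (fderiv ℝ ψ x (z - x)) 0 :=
    hd.hasFDerivAt.comp_hasDerivAt_of_eq 0 hline (by simp)
  have := hu.le_slope_of_hasDerivWithinAt_Ioi (by simp) (by simp) one_pos hu'.hasDerivWithinAt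
  simp only [u, slope_def_field, one_smul, zero_smul, add_zero, add_sub_cancel, sub_zero,
    div_one] at this
  linarith

theorem det_fderiv_ne_zero_of_leftInverse {f g : E → E} (h : Function.LeftInverse g f) {x : E}
    (hf : DifferentiableAt ℝ f x) (hg : DifferentiableAt ℝ g (f x)) :
    (fderiv ℝ f x).det ≠ 0 := by
  have hcomp : (fderiv ℝ g (f x)).comp (fderiv ℝ f x) = ContinuousLinearMap.id ℝ E := by
    rw [← fderiv_comp x hg hf, h.comp_eq_id, fderiv_id]
  have := congrArg ContinuousLinearMap.det hcomp
  simp only [ContinuousLinearMap.det, ContinuousLinearMap.toLinearMap_comp,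
    ContinuousLinearMap.coe_id, LinearMap.det_comp, LinearMap.det_id] at this
  exact right_ne_zero_of_mul (this.trans_ne one_ne_zero)

end NormedSpace

section Determinant

variable {F : Type*} [NormedAddCommGroup F] [InnerProductSpace ℝ F] [FiniteDimensional ℝ F]

theorem ContinuousLinearMap.det_ne_zero_of_coercive {A : F →L[ℝ] F} {c : ℝ} (hc : 0 < c)
    (hA : ∀ v, c * ‖v‖ ^ 2 ≤ inner ℝ (A v) v) : A.det ≠ 0 := by
  refine (LinearMap.isUnit_iff_isUnit_det _).1 ?_ |>.ne_zero
  rw [LinearMap.isUnit_iff_ker_eq_bot, LinearMap.ker_eq_bot']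
  intro v hv
  have := hA v
  simp only [coe_coe] at hv
  rw [hv, inner_zero_left] at this
  have hv0 : ‖v‖ ^ 2 = 0 := le_antisymm (by nlinarith) (sq_nonneg _)
  simpa using hv0

theorem ContinuousLinearMap.det_nonneg_of_inner_self_nonneg {A : F →L[ℝ] F}
    (hA : ∀ v, 0 ≤ inner ℝ (A v) v) : 0 ≤ A.det := by
  -- Along the segment from `id` to `A` every map is coercive except possibly `A`, so the
  -- determinant cannot change sign.
  set q : ℝ → ℝ := fun t => ((1 - t) • ContinuousLinearMap.id ℝ F + t • A).det
  have hq : Continuous q := ContinuousLinearMap.continuous_det.comp (by fun_prop)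
  by_contra! hneg
  obtain ⟨t, ht, hqt⟩ : ∃ t ∈ Icc (0 : ℝ) 1, q t = 0 :=
    intermediate_value_Icc' zero_le_one hq.continuousOn
      ⟨by simpa [q] using hneg.le, by simp [q, ContinuousLinearMap.det, LinearMap.det_id]⟩
  rcases ht.2.lt_or_eq with ht1 | rfl
  · refine det_ne_zero_of_coercive (sub_pos.2 ht1) (fun v => ?_) hqt
    simp only [add_apply, smul_apply, id_apply, inner_add_left, inner_smul_left, conj_trivial,
      real_inner_self_eq_norm_sq, le_add_iff_nonneg_right]
    exact mul_nonneg ht.1 (hA v)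
  · simp only [q, sub_self, zero_smul, one_smul, zero_add] at hqt
    exact hneg.ne hqt

end Determinant

section Legendre

variable {F : Type*} [NormedAddCommGroup F] [InnerProductSpace ℝ F] {ψ L : F → ℝ}

def IsLegendreTransform (ψ L : F → ℝ) : Prop :=
  ∀ y, IsLUB (range fun x => inner ℝ x y - ψ x) (L y)

theorem IsLegendreTransform.inner_sub_le (hL : IsLegendreTransform ψ L) (x y : F) :
    inner ℝ x y - ψ x ≤ L y :=
  (hL y).1 ⟨x, rfl⟩

variable [CompleteSpace F]

theorem ContDiff.differentiable_gradient {n : WithTop ℕ∞} (hψ : ContDiff ℝ n ψ) (hn : 2 ≤ n) :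
    Differentiable ℝ (gradient ψ) := by
  have h : ContDiff ℝ 1 (fderiv ℝ ψ) := hψ.fderiv_right (by simpa [one_add_one_eq_two] using hn)
  exact ((InnerProductSpace.toDual ℝ F).symm.contDiff.comp h).differentiable one_ne_zero

theorem ConvexOn.inner_fderiv_gradient_apply_self_nonneg (hc : ConvexOn ℝ univ ψ)
    (hψ : Differentiable ℝ ψ) {x : F} (h : DifferentiableAt ℝ (gradient ψ) x) (v : F) :
    0 ≤ inner ℝ (fderiv ℝ (gradient ψ) x v) v := by
  set u : ℝ → ℝ := fun t => ψ (x + t • v)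
  have hline (t : ℝ) : HasDerivAt (fun t : ℝ => x + t • v) v t := by
    simpa using ((hasDerivAt_id t).smul_const v).const_add x
  have hu : ConvexOn ℝ univ u := by
    refine (hc.comp_affineMap (AffineMap.lineMap x (x + v))).congr fun t _ => ?_
    simp [u, AffineMap.lineMap_apply_module', add_comm]
  have hu' (t : ℝ) : HasDerivAt u (inner ℝ (gradient ψ (x + t • v)) v) t := by
    rw [inner_gradient_left]
    exact (hψ _).hasFDerivAt.comp_hasDerivAt t (hline t)
  have hmono : Monotone fun t : ℝ => inner ℝ (gradient ψ (x + t • v)) v := by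
    rw [← funext fun t => (hu' t).deriv, ← monotoneOn_univ]
    exact hu.monotoneOn_deriv fun t _ => (hu' t).differentiableAt
  have hderiv : HasDerivAt (fun t : ℝ => inner ℝ (gradient ψ (x + t • v)) v)
      (inner ℝ (fderiv ℝ (gradient ψ) x v) v) 0 := by
    have := h.hasFDerivAt.comp_hasDerivAt_of_eq 0 (hline 0) (by simp)
    exact this.inner ℝ (hasDerivAt_const 0 v) |>.congr_deriv (by simp)
  exact hderiv.deriv ▸ hmono.deriv_nonneg

namespace IsLegendreTransform

theorem apply_gradient (hL : IsLegendreTransform ψ L) (hc : ConvexOn ℝ univ ψ)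
    (hψ : Differentiable ℝ ψ) (x : F) :
    L (gradient ψ x) = inner ℝ x (gradient ψ x) - ψ x := by
  refine (hL _).unique (IsGreatest.isLUB ⟨⟨x, rfl⟩, ?_⟩)
  rintro _ ⟨z, rfl⟩
  have := hc.add_fderiv_sub_le (mem_univ x) (mem_univ z) (hψ x)
  rw [← inner_gradient_left, inner_sub_right] at this
  simp only [real_inner_comm (gradient ψ x)] at this ⊢
  linarith

theorem gradient_apply_gradient (hL : IsLegendreTransform ψ L) (hc : ConvexOn ℝ univ ψ)
    (hψ : Differentiable ℝ ψ) {x : F} (hLd : DifferentiableAt ℝ L (gradient ψ x)) :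
    gradient L (gradient ψ x) = x := by
  have hmin : IsLocalMin (fun y => L y - inner ℝ x y) (gradient ψ x) :=
    .of_forall fun y => by linarith [hL.inner_sub_le x y, hL.apply_gradient hc hψ x]
  have h := hmin.hasFDerivAt_eq_zero (hLd.hasFDerivAt.sub (innerSL ℝ x).hasFDerivAt)
  rw [sub_eq_zero] at h
  rw [gradient, h]
  exact (InnerProductSpace.toDual ℝ F).symm_apply_apply x

theorem det_fderiv_gradient_pos [FiniteDimensional ℝ F] (hL : IsLegendreTransform ψ L)
    (hc : ConvexOn ℝ univ ψ) (hψ : ContDiff ℝ 2 ψ) (hLC : ContDiff ℝ 2 L) (x : F) :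
    0 < (fderiv ℝ (gradient ψ) x).det := by
  have hψd : Differentiable ℝ ψ := hψ.differentiable (by norm_num)
  have hgrad := hψ.differentiable_gradient le_rfl
  refine lt_of_le_of_ne ?_ (det_fderiv_ne_zero_of_leftInverse ?_ (hgrad x)
    (hLC.differentiable_gradient le_rfl _)).symm
  · exact ContinuousLinearMap.det_nonneg_of_inner_self_nonneg
      (hc.inner_fderiv_gradient_apply_self_nonneg hψd (hgrad x))
  · exact fun y => hL.gradient_apply_gradient hc hψd (hLC.differentiable (by norm_num) _)

end IsLegendreTransform

end Legendre

section ChangeOfVariables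

variable {E : Type*} [NormedAddCommGroup E] [NormedSpace ℝ E] [FiniteDimensional ℝ E]
  [MeasurableSpace E] [BorelSpace E] (μ : Measure E) [μ.IsAddHaarMeasure] {T : E → E}
  {h : E → ℝ}

theorem integrable_abs_det_fderiv_mul_comp_iff (hT : Function.Bijective T)
    (hT' : Differentiable ℝ T) :
    Integrable (fun x => |(fderiv ℝ T x).det| * h (T x)) μ ↔ Integrable h μ := by
  have := integrableOn_image_iff_integrableOn_abs_det_fderiv_smul μ MeasurableSet.univ
    (fun x _ => (hT' x).hasFDerivAt.hasFDerivWithinAt) hT.1.injOn h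
  rw [image_univ, hT.2.range_eq, integrableOn_univ, integrableOn_univ] at this
  simpa only [smul_eq_mul] using this.symm

theorem integral_abs_det_fderiv_mul_comp (hT : Function.Bijective T)
    (hT' : Differentiable ℝ T) :
    ∫ x, |(fderiv ℝ T x).det| * h (T x) ∂μ = ∫ y, h y ∂μ := by
  have := integral_image_eq_integral_abs_det_fderiv_smul μ MeasurableSet.univ
    (fun x _ => (hT' x).hasFDerivAt.hasFDerivWithinAt) hT.1.injOn h
  rw [image_univ, hT.2.range_eq, setIntegral_univ, setIntegral_univ] at this
  simpa only [smul_eq_mul] using this.symm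

end ChangeOfVariables

section Jensen

theorem ConvexOn.add_rightDeriv_mul_sub_le {f : ℝ → ℝ} {S : Set ℝ} (hf : ConvexOn ℝ S f)
    {m t : ℝ} (hm : m ∈ interior S) (ht : t ∈ S) :
    f m + derivWithin f (Ioi m) m * (t - m) ≤ f t := by
  rcases lt_trichotomy t m with htm | rfl | hmt
  · have h := (hf.slope_le_leftDeriv_of_mem_interior ht hm htm).trans
      (hf.leftDeriv_le_rightDeriv_of_mem_interior hm)
    rw [slope_def_field, div_le_iff₀ (sub_pos.2 htm)] at h
    linarith
  · simp
  · have h := hf.rightDeriv_le_slope_of_mem_interior hm ht hmt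
    rw [slope_def_field, le_div_iff₀ (sub_pos.2 hmt)] at h
    linarith

variable {α : Type*} [MeasurableSpace α] {μ : Measure α} {f : ℝ → ℝ} {w g : α → ℝ}

theorem ConvexOn.map_weighted_integral_le (hf : ConvexOn ℝ (Ioi 0) f) (hw : ∀ x, 0 ≤ w x)
    (hg : ∀ x, 0 < g x) (hwi : Integrable w μ) (hwgi : Integrable (fun x => w x * g x) μ)
    (hwfgi : Integrable (fun x => w x * f (g x)) μ) (hw0 : 0 < ∫ x, w x ∂μ)
    (hwg0 : 0 < ∫ x, w x * g x ∂μ) :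
    f ((∫ x, w x * g x ∂μ) / ∫ x, w x ∂μ) * ∫ x, w x ∂μ ≤ ∫ x, w x * f (g x) ∂μ := by
  set m := (∫ x, w x * g x ∂μ) / ∫ x, w x ∂μ
  set c := derivWithin f (Ioi m) m
  have hm : m ∈ interior (Ioi 0) := by
    rw [interior_Ioi]
    exact div_pos hwg0 hw0
  have haffine : (fun x => w x * (f m + c * (g x - m)))
      = fun x => (f m - c * m) * w x + c * (w x * g x) := by
    ext x
    ring
  calc f m * ∫ x, w x ∂μ
      = ∫ x, w x * (f m + c * (g x - m)) ∂μ := by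
        rw [haffine, integral_add (hwi.const_mul _) (hwgi.const_mul _), integral_const_mul,
          integral_const_mul, ← div_mul_cancel₀ (∫ x, w x * g x ∂μ) hw0.ne']
        ring
    _ ≤ ∫ x, w x * f (g x) ∂μ := by
        refine integral_mono (haffine ▸ (hwi.const_mul _).add (hwgi.const_mul _)) hwfgi
          fun x => ?_
        exact mul_le_mul_of_nonneg_left (hf.add_rightDeriv_mul_sub_le hm (hg x)) (hw x)

theorem ConcaveOn.le_map_weighted_integral (hf : ConcaveOn ℝ (Ioi 0) f) (hw : ∀ x, 0 ≤ w x)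
    (hg : ∀ x, 0 < g x) (hwi : Integrable w μ) (hwgi : Integrable (fun x => w x * g x) μ)
    (hwfgi : Integrable (fun x => w x * f (g x)) μ) (hw0 : 0 < ∫ x, w x ∂μ)
    (hwg0 : 0 < ∫ x, w x * g x ∂μ) :
    ∫ x, w x * f (g x) ∂μ ≤ f ((∫ x, w x * g x ∂μ) / ∫ x, w x ∂μ) * ∫ x, w x ∂μ := by
  have := hf.neg.map_weighted_integral_le hw hg hwi hwgi (by simpa using hwfgi.neg) hw0 hwg0
  simp only [Pi.neg_apply, mul_neg, neg_mul, integral_neg] at this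
  linarith

end Jensen

/-- For `f` convex on `(0,∞)` and `φ = e^{−ψ}` log-concave (`ψ` strictly
convex, `C²`, `∇ψ` a diffeomorphism onto `ℝⁿ`, with dual `φ° = e^{−Lψ}`),
`∫ φ f( e^{⟨∇φ/φ,x⟩} φ^{−2} det Hess(−ln φ) ) dx ≥ f( (∫φ°)/(∫φ) ) ∫ φ dx`;
if `f` is concave the inequality is reversed. -/
theorem entropy_inequality_logconcave {n : ℕ}
    (f : ℝ → ℝ)
    (ψ L : EuclideanSpace ℝ (Fin n) → ℝ)
    (hψ : ContDiff ℝ 2 ψ) (hsc : StrictConvexOn ℝ Set.univ ψ)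
    (hL : ∀ y, IsLUB (Set.range fun x => (inner ℝ x y : ℝ) - ψ x) (L y))
    (hdiffeo : Function.Bijective (gradient ψ)) (hLC2 : ContDiff ℝ 2 L)
    (hintφ : Integrable (fun x => Real.exp (-(ψ x))))
    (hintφo : Integrable (fun y => Real.exp (-(L y))))
    (hintf : Integrable (fun x => Real.exp (-(ψ x)) *
      f (Real.exp (2 * ψ x - (inner ℝ (gradient ψ x) x : ℝ)) * detHess ψ x))) :
    (ConvexOn ℝ (Set.Ioi (0 : ℝ)) f →
      (∫ x, Real.exp (-(ψ x)) *
          f (Real.exp (2 * ψ x - (inner ℝ (gradient ψ x) x : ℝ)) * detHess ψ x))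
        ≥ f ((∫ y, Real.exp (-(L y))) / (∫ x, Real.exp (-(ψ x))))
            * ∫ x, Real.exp (-(ψ x))) ∧
    (ConcaveOn ℝ (Set.Ioi (0 : ℝ)) f →
      (∫ x, Real.exp (-(ψ x)) *
          f (Real.exp (2 * ψ x - (inner ℝ (gradient ψ x) x : ℝ)) * detHess ψ x))
        ≤ f ((∫ y, Real.exp (-(L y))) / (∫ x, Real.exp (-(ψ x))))
            * ∫ x, Real.exp (-(ψ x))) := by
  have hL : IsLegendreTransform ψ L := hL
  have hc : ConvexOn ℝ univ ψ := hsc.convexOn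
  have hdet (x) : 0 < (fderiv ℝ (gradient ψ) x).det := hL.det_fderiv_gradient_pos hc hψ hLC2 x
  set g := fun x => exp (2 * ψ x - inner ℝ (gradient ψ x) x) * detHess ψ x
  have hg (x) : 0 < g x := mul_pos (exp_pos _) (hdet x)
  have hdual : (fun x => exp (-(ψ x)) * g x)
      = fun x => |(fderiv ℝ (gradient ψ) x).det| * exp (-(L (gradient ψ x))) := by
    ext x
    rw [abs_of_pos (hdet x), hL.apply_gradient hc (hψ.differentiable (by norm_num)),
      real_inner_comm, ← mul_assoc, ← exp_add, mul_comm _ (detHess ψ x)]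
    congr 2
    ring
  have hgrad := hψ.differentiable_gradient le_rfl
  have hintφg : Integrable fun x => exp (-(ψ x)) * g x := by
    rw [hdual]
    exact (integrable_abs_det_fderiv_mul_comp_iff volume hdiffeo hgrad).2 hintφo
  have hφg : ∫ x, exp (-(ψ x)) * g x = ∫ y, exp (-(L y)) := by
    rw [hdual]
    exact integral_abs_det_fderiv_mul_comp volume hdiffeo hgrad (h := fun y => exp (-(L y)))
  have hφ_pos := integral_exp_pos (f := fun x => -ψ x) hintφ
  have hφg_pos : 0 < ∫ x, exp (-(ψ x)) * g x := hφg ▸ integral_exp_pos hintφo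
  rw [← hφg]
  exact ⟨fun hf => hf.map_weighted_integral_le (fun _ => (exp_pos _).le) hg hintφ hintφg hintf
      hφ_pos hφg_pos,
    fun hf => hf.le_map_weighted_integral (fun _ => (exp_pos _).le) hg hintφ hintφg hintf
      hφ_pos hφg_pos⟩
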